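/- arXiv:1203.3860 — 4 statements merged into one kernel-verified Lean document; each statement's English description precedes it below -/
import Mathlib

section
/- For all real θ with 0 < θ < π and all positive reals a, b, one has arcsin(cosh(a)/cosh(z)) = arctan( sin(θ/2)·cosh(a) / (cos(θ/2)·cosh(a) + cosh(b)) ), where z > 0 is defined by cosh²(z) = (cosh²(a) + cosh²(b) + 2cos(θ/2)cosh(a)cosh(b)) / sin²(θ/2). -/
/-!
Both sides are the same acute angle of a right triangle with legs `sin(θ/2) cosh a` and
`cos(θ/2) cosh a + cosh b` and hypotenuse `sin(θ/2) cosh z`: with `sin² + cos² = 1`, the pants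
relation is exactly Pythagoras' theorem for this triangle.
-/

open Real

theorem Real.arcsin_div_eq_arctan_div {x y r : ℝ} (hy : 0 < y) (hr : 0 < r)
    (hpyth : x ^ 2 + y ^ 2 = r ^ 2) : arcsin (x / r) = arctan (x / y) := by
  have hcos : 1 - (x / r) ^ 2 = (y / r) ^ 2 := by
    field_simp
    linarith
  have hmem : x / r ∈ Set.Ioo (-1 : ℝ) 1 := by
    rw [Set.mem_Ioo, ← abs_lt, ← sq_lt_one_iff_abs_lt_one]
    nlinarith [sq_pos_of_pos (div_pos hy hr)]
  rw [arcsin_eq_arctan hmem, hcos, sqrt_sq (div_pos hy hr).le, div_div_div_cancel_right₀ hr.ne']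

theorem stmt_0_general (θ a b z : ℝ) (hθ0 : 0 < θ) (hθπ : θ < Real.pi)
    (hrel : Real.cosh z ^ 2 * Real.sin (θ / 2) ^ 2 =
      Real.cosh a ^ 2 + Real.cosh b ^ 2 +
        2 * Real.cos (θ / 2) * Real.cosh a * Real.cosh b) :
    Real.arcsin (Real.cosh a / Real.cosh z) =
      Real.arctan (Real.sin (θ / 2) * Real.cosh a /
        (Real.cos (θ / 2) * Real.cosh a + Real.cosh b)) := by
  have hsin : 0 < sin (θ / 2) := sin_pos_of_pos_of_lt_pi (by linarith) (by linarith)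
  have hcos : 0 < cos (θ / 2) := cos_pos_of_mem_Ioo ⟨by linarith [pi_pos], by linarith⟩
  rw [← mul_div_mul_left (cosh a) (cosh z) hsin.ne']
  refine arcsin_div_eq_arctan_div (by positivity) (mul_pos hsin (cosh_pos z)) ?_
  linear_combination -hrel + cosh a ^ 2 * sin_sq_add_cos_sq (θ / 2)

theorem stmt_0 (θ a b z : ℝ) (hθ0 : 0 < θ) (hθπ : θ < Real.pi)
    (ha : 0 < a) (hb : 0 < b) (hz : 0 < z)
    (hrel : Real.cosh z ^ 2 * Real.sin (θ / 2) ^ 2 =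
      Real.cosh a ^ 2 + Real.cosh b ^ 2 +
        2 * Real.cos (θ / 2) * Real.cosh a * Real.cosh b) :
    Real.arcsin (Real.cosh a / Real.cosh z) =
      Real.arctan (Real.sin (θ / 2) * Real.cosh a /
        (Real.cos (θ / 2) * Real.cosh a + Real.cosh b)) :=
  stmt_0_general θ a b z hθ0 hθπ hrel
end

section
/- For all real θ with 0 < θ < π and all positive reals a, b, one has arcsin(sinh(a)/sinh(z)) = arctan( sin(θ/2)·sinh(a) / (cos(θ/2)·cosh(a) + cosh(b)) ), where z > 0 satisfies cosh²(z)·sin²(θ/2) = cosh²(a) + cosh²(b) + 2cos(θ/2)cosh(a)cosh(b). -/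
open Real

theorem stmt_1 (θ a b z : ℝ) (hθ0 : 0 < θ) (hθπ : θ < Real.pi)
    (ha : 0 < a) (hb : 0 < b) (hz : 0 < z)
    (hrel : Real.cosh z ^ 2 * Real.sin (θ / 2) ^ 2 =
      Real.cosh a ^ 2 + Real.cosh b ^ 2 +
        2 * Real.cos (θ / 2) * Real.cosh a * Real.cosh b) :
    Real.arcsin (Real.sinh a / Real.sinh z) =
      Real.arctan (Real.sin (θ / 2) * Real.sinh a /
        (Real.cos (θ / 2) * Real.cosh a + Real.cosh b)) := by
  set s := Real.sin (θ / 2) with hs_def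
  set c := Real.cos (θ / 2) with hc_def
  have hs : 0 < s := Real.sin_pos_of_pos_of_lt_pi (by linarith) (by linarith [Real.pi_pos])
  have hc : 0 < c := Real.cos_pos_of_mem_Ioo ⟨by linarith [Real.pi_pos], by linarith⟩
  have hsc : s ^ 2 + c ^ 2 = 1 := by
    rw [hs_def, hc_def]; exact Real.sin_sq_add_cos_sq _
  have hca : 1 ≤ Real.cosh a := Real.one_le_cosh a
  have hcb : 1 ≤ Real.cosh b := Real.one_le_cosh b
  have hD : 0 < c * Real.cosh a + Real.cosh b := by positivity
  have hsa : 0 < Real.sinh a := Real.sinh_pos_iff.mpr ha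
  have hsz : 0 < Real.sinh z := Real.sinh_pos_iff.mpr hz
  have key : s ^ 2 * (Real.sinh z ^ 2 - Real.sinh a ^ 2) =
      (c * Real.cosh a + Real.cosh b) ^ 2 := by
    have h1 := Real.cosh_sq z
    have h2 := Real.cosh_sq a
    nlinarith [hrel, hsc]
  have hsum : 0 < Real.sinh a + Real.sinh z := by linarith
  have hsq : Real.sinh a ^ 2 < Real.sinh z ^ 2 := by
    nlinarith [key, mul_pos hD hD, pow_pos hs 2]
  have hlt : Real.sinh a < Real.sinh z :=
    lt_of_pow_lt_pow_left₀ 2 (le_of_lt hsz) hsq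
  have hmem : Real.sinh a / Real.sinh z ∈ Set.Ioo (-1 : ℝ) 1 := by
    constructor
    · have : (0:ℝ) < Real.sinh a / Real.sinh z := by positivity
      linarith
    · rw [div_lt_one hsz]; exact hlt
  rw [Real.arcsin_eq_arctan hmem]
  congr 1
  have h1x : 1 - (Real.sinh a / Real.sinh z) ^ 2 =
      ((c * Real.cosh a + Real.cosh b) / (s * Real.sinh z)) ^ 2 := by
    field_simp
    nlinarith [key]
  rw [h1x, Real.sqrt_sq (by positivity)]
  field_simp
end

section
/- For all real θ with 0 < θ < π and all positive reals a, b, with z > 0 defined by cosh²(z)·sin²(θ/2) = cosh²(a) + cosh²(b) + 2cos(θ/2)cosh(a)cosh(b), the following identity holds: arcsin(cosh(a)/cosh(z)) − arcsin(sinh(a)/sinh(z)) + arcsin(cosh(b)/cosh(z)) = θ/2 − arctan( sin(θ/2)·sinh(a) / (cos(θ/2)·cosh(a) + cosh(b)) ). -/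
/-!
Put `K = (cos (θ/2) cosh a + cosh b) / sin (θ/2)` and
`L = (cos (θ/2) cosh b + cosh a) / sin (θ/2)`. The pants relation says `cosh² a + K² = cosh² z`,
equivalently `cosh² b + L² = cosh² z`, and so also `sinh² a + K² = sinh² z`. These right
triangles give the cosines of the three arcsines. The subtraction formula for
`sin (θ/2 - arcsin (cosh b / cosh z))` shows that the two `cosh`-arcsines add up to `θ/2`, and the
third triangle identifies the `sinh`-arcsine with the arctangent.
-/

open Real

lemma arcsin_add_arcsin_eq_of_sq_add_sq {φ x y w : ℝ} (hφ₀ : 0 ≤ φ) (hφ : φ ≤ π / 2)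
    (hy₀ : 0 ≤ y) (hw : 0 ≤ w) (hyw : y ^ 2 + w ^ 2 = 1) (hx : x = sin φ * w - cos φ * y) :
    arcsin x + arcsin y = φ := by
  have hy₁ : y ≤ 1 := by nlinarith
  have hsin : sin (arcsin y) = y := sin_arcsin (by linarith) hy₁
  have hcos : cos (arcsin y) = w := by
    rw [cos_arcsin, show 1 - y ^ 2 = w ^ 2 by linarith, sqrt_sq hw]
  have hx' : x = sin (φ - arcsin y) := by rw [sin_sub, hsin, hcos, hx]
  have := arcsin_nonneg.mpr hy₀
  have := arcsin_le_pi_div_two y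
  rw [hx', arcsin_sin (by linarith) (by linarith)]
  ring

lemma arctan_div_eq_arcsin {p q : ℝ} (hq : 0 < q) (hpq : p ^ 2 + q ^ 2 = 1) :
    arctan (p / q) = arcsin p := by
  rw [arcsin_eq_arctan ⟨by nlinarith, by nlinarith⟩,
    show 1 - p ^ 2 = q ^ 2 by linarith, sqrt_sq hq.le]

theorem stmt_2_general (θ a b z : ℝ) (hθ0 : 0 < θ) (hθπ : θ < Real.pi)
    (hz : 0 < z)
    (hrel : Real.cosh z ^ 2 * Real.sin (θ / 2) ^ 2 =
      Real.cosh a ^ 2 + Real.cosh b ^ 2 +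
        2 * Real.cos (θ / 2) * Real.cosh a * Real.cosh b) :
    Real.arcsin (Real.cosh a / Real.cosh z) - Real.arcsin (Real.sinh a / Real.sinh z) +
        Real.arcsin (Real.cosh b / Real.cosh z) =
      θ / 2 - Real.arctan (Real.sin (θ / 2) * Real.sinh a /
        (Real.cos (θ / 2) * Real.cosh a + Real.cosh b)) := by
  have hs : 0 < sin (θ / 2) := sin_pos_of_pos_of_lt_pi (by linarith) (by linarith)
  have hc : 0 < cos (θ / 2) := cos_pos_of_mem_Ioo ⟨by linarith, by linarith⟩
  have hpyth := sin_sq_add_cos_sq (θ / 2)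
  set K := (cos (θ / 2) * cosh a + cosh b) / sin (θ / 2)
  set L := (cos (θ / 2) * cosh b + cosh a) / sin (θ / 2)
  have hK : (sinh a / sinh z) ^ 2 + (K / sinh z) ^ 2 = 1 := by
    simp only [K]
    field_simp
    linear_combination -hrel + cosh a ^ 2 * hpyth + sin (θ / 2) ^ 2 * (cosh_sq z - cosh_sq a)
  have hL : (cosh b / cosh z) ^ 2 + (L / cosh z) ^ 2 = 1 := by
    simp only [L]
    field_simp
    linear_combination -hrel + cosh b ^ 2 * hpyth
  have hsum : arcsin (cosh a / cosh z) + arcsin (cosh b / cosh z) = θ / 2 :=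
    arcsin_add_arcsin_eq_of_sq_add_sq (by linarith) (by linarith) (by positivity) (by positivity) hL
      (by simp only [L]; field_simp; ring)
  have harctan : arctan (sin (θ / 2) * sinh a / (cos (θ / 2) * cosh a + cosh b)) =
      arcsin (sinh a / sinh z) := by
    rw [← arctan_div_eq_arcsin (by positivity) hK]
    congr 1
    simp only [K]
    field_simp
  linarith

theorem stmt_2 (θ a b z : ℝ) (hθ0 : 0 < θ) (hθπ : θ < Real.pi)
    (ha : 0 < a) (hb : 0 < b) (hz : 0 < z)
    (hrel : Real.cosh z ^ 2 * Real.sin (θ / 2) ^ 2 =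
      Real.cosh a ^ 2 + Real.cosh b ^ 2 +
        2 * Real.cos (θ / 2) * Real.cosh a * Real.cosh b) :
    Real.arcsin (Real.cosh a / Real.cosh z) - Real.arcsin (Real.sinh a / Real.sinh z) +
        Real.arcsin (Real.cosh b / Real.cosh z) =
      θ / 2 - Real.arctan (Real.sin (θ / 2) * Real.sinh a /
        (Real.cos (θ / 2) * Real.cosh a + Real.cosh b)) :=
  stmt_2_general θ a b z hθ0 hθπ hz hrel
end

section
/- For all reals x, y ∈ ℝ and z > 0 satisfying cosh(x)cosh(y)cosh(z) − sinh(x)sinh(z) > 1, the quantity (2(cosh(x)cosh(y)sinh(z) − sinh(x)cosh(z))² / ((cosh(x)cosh(y)cosh(z) − sinh(x)sinh(z))² − 1)) − 1 lies in the interval [−1, 1], so that Θ(x,y,z) := (1/2)·arccos of this quantity is well-defined. -/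
open Real

theorem stmt_6 (x y z : ℝ) (hz : 0 < z)
    (h : 1 < Real.cosh x * Real.cosh y * Real.cosh z - Real.sinh x * Real.sinh z) :
    2 * (Real.cosh x * Real.cosh y * Real.sinh z - Real.sinh x * Real.cosh z) ^ 2 /
        ((Real.cosh x * Real.cosh y * Real.cosh z - Real.sinh x * Real.sinh z) ^ 2 - 1) - 1 ∈
      Set.Icc (-1 : ℝ) 1 := by
  have hx := Real.cosh_sq_sub_sinh_sq x
  have hy := Real.cosh_sq_sub_sinh_sq y
  have hzz := Real.cosh_sq_sub_sinh_sq z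
  set N := Real.cosh x * Real.cosh y * Real.sinh z - Real.sinh x * Real.cosh z with hN
  set D := Real.cosh x * Real.cosh y * Real.cosh z - Real.sinh x * Real.sinh z with hD
  have hd : 0 < D ^ 2 - 1 := by nlinarith
  have hkey : N ^ 2 ≤ D ^ 2 - 1 := by
    rw [hN, hD]; nlinarith [sq_nonneg (Real.cosh x * Real.sinh y), sq_nonneg (Real.cosh x * Real.cosh y), hx, hy, hzz]
  constructor
  · have : 0 ≤ 2 * N ^ 2 / (D ^ 2 - 1) := by positivity
    linarith
  · have : 2 * N ^ 2 / (D ^ 2 - 1) ≤ 2 := by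
      rw [div_le_iff₀ hd]; linarith
    linarith
end
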